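/- Fix K ≥ 0, a nonempty set Θ, T ≥ 0, and a family of maps f_θ : ℝ^n × ℝ^m → ℝ^n (θ ∈ Θ) satisfying ‖f_θ(x,u) − f_θ(y,v)‖ ≤ K(‖x−y‖ + ‖u−v‖) for all θ, x, y, u, v. For a nonempty compact set X₀ ⊆ ℝ^n, a constant control ū ∈ ℝ^m, and t ∈ [0,T], define the reachable set X_t^{ū}(X₀) as the set of all values x(t) where x : [0,t] → ℝ^n satisfies x(s) = x(0) + ∫₀ˢ f_θ(x(τ), ū) dτ on [0,t] for some x(0) ∈ X₀ and some θ ∈ Θ. Assume solutions exist on [0,T] for every θ ∈ Θ, every initial state, and every constant control. Then there exists a constant L_T ≥ 0 (depending only on K and T) such that for all nonempty compact X₀¹, X₀² ⊆ ℝ^n, all ū₁, ū₂ ∈ ℝ^m, and all t ∈ [0,T]: d_H(X_t^{ū₁}(X₀¹), X_t^{ū₂}(X₀²)) ≤ L_T·(d_H(X₀¹, X₀²) + ‖ū₁ − ū₂‖). -/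

import Mathlib

open MeasureTheory Set

/-- The reachable set at time `t` of the uncertain dynamics `ẋ = f θ x u` under the constant
control `u`, starting from the initial set `X₀`: all values `x t` of solutions
`x s = x 0 + ∫₀ˢ f θ (x τ) u dτ` on `[0, t]` with `x 0 ∈ X₀` and some parameter `θ ∈ Θ`. -/
def reachSet {n m : ℕ} {Θ : Type*}
    (f : Θ → EuclideanSpace ℝ (Fin n) → EuclideanSpace ℝ (Fin m) → EuclideanSpace ℝ (Fin n))
    (X₀ : Set (EuclideanSpace ℝ (Fin n))) (u : EuclideanSpace ℝ (Fin m)) (t : ℝ) :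
    Set (EuclideanSpace ℝ (Fin n)) :=
  {y | ∃ θ : Θ, ∃ x : ℝ → EuclideanSpace ℝ (Fin n), x 0 ∈ X₀ ∧
    (∀ s ∈ Icc (0 : ℝ) t, x s = x 0 + ∫ τ in (0 : ℝ)..s, f θ (x τ) u) ∧ y = x t}


section Stmt8Aux

open Metric Real Filter Topology

variable {E : Type*} [NormedAddCommGroup E] [NormedSpace ℝ E] [CompleteSpace E]

lemma lipschitz_of_bound' {K : ℝ} (hK : 0 ≤ K) {F : E → E}
    (hF : ∀ x y, ‖F x - F y‖ ≤ K * ‖x - y‖) : LipschitzWith K.toNNReal F := by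
  apply LipschitzWith.of_dist_le_mul
  intro a b
  rw [dist_eq_norm, dist_eq_norm, Real.coe_toNNReal K hK]
  exact hF a b

lemma gronwallBound_mono' {K ε : ℝ} (hK : 0 ≤ K) (hε : 0 ≤ ε) {s t : ℝ}
    (hst : s ≤ t) : gronwallBound 0 K ε s ≤ gronwallBound 0 K ε t := by
  unfold gronwallBound
  split_ifs with h
  · nlinarith
  · have hK' : 0 < K := lt_of_le_of_ne hK (Ne.symm h)
    have h2 : Real.exp (K * s) ≤ Real.exp (K * t) :=
      Real.exp_le_exp.2 (mul_le_mul_of_nonneg_left hst hK)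
    have h1 : 0 ≤ ε / K := div_nonneg hε hK
    nlinarith

lemma gronwallBound_le_L {K T δ c t : ℝ} (hK : 0 ≤ K) (hδ : 0 ≤ δ) (hc : 0 ≤ c)
    (ht : 0 ≤ t) (htT : t ≤ T) :
    gronwallBound δ K (K * c) t ≤ Real.exp (K * T) * (1 + K * T) * (δ + c) := by
  have hT : 0 ≤ T := ht.trans htT
  have he1 : 1 ≤ Real.exp (K * T) := Real.one_le_exp (by positivity)
  unfold gronwallBound
  split_ifs with h
  · rw [h]; simp only [zero_mul, Real.exp_zero, zero_add, add_zero, one_mul, mul_zero]; nlinarith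
  · have hK' : 0 < K := lt_of_le_of_ne hK (Ne.symm h)
    rw [mul_comm K c, mul_div_assoc, div_self h, mul_one]
    have hee : Real.exp (K * t) ≤ Real.exp (K * T) :=
      Real.exp_le_exp.2 (mul_le_mul_of_nonneg_left htT hK)
    have h3 : Real.exp (K * t) * (Real.exp (K * t))⁻¹ = 1 :=
      mul_inv_cancel₀ (Real.exp_ne_zero _)
    have h4 : -(K * t) + 1 ≤ Real.exp (-(K * t)) := Real.add_one_le_exp _
    rw [Real.exp_neg] at h4
    have h5 : Real.exp (K * t) - 1 ≤ K * t * Real.exp (K * t) := by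
      nlinarith [Real.exp_pos (K * t)]
    have h6 : K * t * Real.exp (K * t) ≤ K * T * Real.exp (K * T) := by
      have h7 : K * t ≤ K * T := mul_le_mul_of_nonneg_left htT hK
      exact mul_le_mul h7 hee (Real.exp_pos _).le (by positivity)
    nlinarith [Real.exp_pos (K * T)]

lemma sol_regular {K t : ℝ} (hK : 0 ≤ K) (ht : 0 ≤ t)
    {F : E → E} (hF : ∀ x y : E, ‖F x - F y‖ ≤ K * ‖x - y‖)
    {x : ℝ → E} (hx : ∀ s ∈ Icc (0:ℝ) t, x s = x 0 + ∫ τ in (0:ℝ)..s, F (x τ)) :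
    ContinuousOn x (Icc 0 t) ∧
      ∀ s ∈ Ico (0:ℝ) t, HasDerivWithinAt x (F (x s)) (Ici s) s := by
  have hFc : Continuous F := (lipschitz_of_bound' hK hF).continuous
  set g : ℝ → E := fun τ => F (x τ) with hgdef
  -- continuity of x on [0,b] from integrability up to b
  have cont_of_int : ∀ b, 0 ≤ b → b ≤ t → IntervalIntegrable g volume 0 b →
      ContinuousOn x (Icc 0 b) := by
    intro b hb0 hbt hib
    have hu : uIcc (0:ℝ) b = Icc 0 b := uIcc_of_le hb0
    have hP : ContinuousOn (fun s => x 0 + ∫ τ in (0:ℝ)..s, g τ) (Icc 0 b) := by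
      have h2 := intervalIntegral.continuousOn_primitive_interval' hib
        (by rw [hu]; exact ⟨le_refl 0, hb0⟩)
      rw [hu] at h2
      exact continuousOn_const.add h2
    exact hP.congr fun s hs => hx s ⟨hs.1, hs.2.trans hbt⟩
  set S : Set ℝ := {s | s ∈ Icc (0:ℝ) t ∧ IntervalIntegrable g volume 0 s} with hSdef
  have h0S : (0:ℝ) ∈ S := ⟨⟨le_refl 0, ht⟩, IntervalIntegrable.refl⟩
  have hSne : S.Nonempty := ⟨0, h0S⟩
  have hSbdd : BddAbove S := ⟨t, fun s hs => hs.1.2⟩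
  set a := sSup S with ha
  have ha0 : 0 ≤ a := le_csSup hSbdd h0S
  have hat : a ≤ t := csSup_le hSne fun s hs => hs.1.2
  have hdown : ∀ s ∈ S, ∀ s', 0 ≤ s' → s' ≤ s → s' ∈ S := by
    intro s hs s' h0 hle
    refine ⟨⟨h0, hle.trans hs.1.2⟩, hs.2.mono_set ?_⟩
    rw [uIcc_of_le h0, uIcc_of_le (h0.trans hle)]
    exact Icc_subset_Icc le_rfl hle
  have hIco : Ico 0 a ⊆ S := by
    intro s hs
    obtain ⟨s', hs'S, hss'⟩ := exists_lt_of_lt_csSup hSne hs.2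
    exact hdown s' hs'S s hs.1 hss'.le
  -- derivative helper
  have deriv_of_int : ∀ b, 0 ≤ b → b ≤ t → IntervalIntegrable g volume 0 b →
      ∀ s ∈ Ico (0:ℝ) b, HasDerivWithinAt x (g s) (Ici s) s := by
    intro b hb0 hbt hib s hs
    have hxc : ContinuousOn x (Icc 0 b) := cont_of_int b hb0 hbt hib
    have hgc : ContinuousOn g (Icc 0 b) := hFc.comp_continuousOn hxc
    have hsb : s < b := hs.2
    have hi_s : IntervalIntegrable g volume 0 s :=
      (hdown b ⟨⟨hb0, hbt⟩, hib⟩ s hs.1 hsb.le).2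
    have hmeas : StronglyMeasurableAtFilter g (𝓝[>] s) volume := by
      refine ⟨Icc s b, Icc_mem_nhdsGT hsb,
        ((hgc.mono (Icc_subset_Icc hs.1 le_rfl)).aestronglyMeasurable measurableSet_Icc)⟩
    have hcw : ContinuousWithinAt g (Ioi s) s := by
      have h1 : ContinuousWithinAt g (Icc 0 b) s := hgc s ⟨hs.1, hsb.le⟩
      refine h1.mono_of_mem_nhdsWithin ?_
      rw [mem_nhdsWithin]
      exact ⟨Iio b, isOpen_Iio, hsb, fun y hy => ⟨hs.1.trans hy.2.le, hy.1.le⟩⟩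
    have hP : HasDerivWithinAt (fun s' => x 0 + ∫ τ in (0:ℝ)..s', g τ) (g s) (Ici s) s :=
      (intervalIntegral.integral_hasDerivWithinAt_right hi_s hmeas hcw).const_add (x 0)
    have hmem : Icc s t ∈ 𝓝[Ici s] s := by
      rw [← nhdsWithin_Icc_eq_nhdsGE (hsb.trans_le hbt)]
      exact self_mem_nhdsWithin
    apply hP.congr_of_eventuallyEq
    · filter_upwards [hmem] with s' hs'
      exact hx s' ⟨hs.1.trans hs'.1, hs'.2⟩
    · exact hx s ⟨hs.1, (hsb.le.trans hbt)⟩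
  set ε0 := ‖g 0‖ with hε0
  set M := gronwallBound 0 K ε0 t with hM
  have hbound : ∀ b ∈ S, ‖x b - x 0‖ ≤ M := by
    intro b hb
    have hb0 : 0 ≤ b := hb.1.1
    have hbt : b ≤ t := hb.1.2
    have hxc := cont_of_int b hb0 hbt hb.2
    have h := norm_le_gronwallBound_of_norm_deriv_right_le
      (f := fun s => x s - x 0) (f' := g) (δ := 0) (K := K) (ε := ε0) (a := 0) (b := b)
      (hxc.sub continuousOn_const)
      (fun s hs => (deriv_of_int b hb0 hbt hb.2 s hs).sub_const (x 0))
      (by simp)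
      (fun s hs => by
        have h1 : ‖g s - g 0‖ ≤ K * ‖x s - x 0‖ := hF (x s) (x 0)
        have h2 : ‖g s‖ ≤ ‖g 0‖ + ‖g s - g 0‖ := norm_le_norm_add_norm_sub' (g s) (g 0)
        simp only [hε0]
        linarith)
      b ⟨hb0, le_rfl⟩
    rw [sub_zero] at h
    exact h.trans (gronwallBound_mono' hK (norm_nonneg _) hbt)
  have hgbd : ∀ s ∈ S, ‖g s‖ ≤ ε0 + K * M := by
    intro s hs
    have h0 := hbound s hs
    have h1 : ‖g s - g 0‖ ≤ K * ‖x s - x 0‖ := hF (x s) (x 0)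
    have h2 : ‖g s‖ ≤ ‖g 0‖ + ‖g s - g 0‖ := norm_le_norm_add_norm_sub' (g s) (g 0)
    have h3 : K * ‖x s - x 0‖ ≤ K * M := mul_le_mul_of_nonneg_left h0 hK
    simp only [hε0]
    linarith
  have haS : a ∈ S := by
    refine ⟨⟨ha0, hat⟩, ?_⟩
    rw [intervalIntegrable_iff_integrableOn_Ioc_of_le ha0]
    have hgcIco : ContinuousOn g (Ico 0 a) := by
      intro s hs
      obtain ⟨b', hb'S, hsb'⟩ := exists_lt_of_lt_csSup hSne hs.2
      have hgc : ContinuousOn g (Icc 0 b') :=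
        hFc.comp_continuousOn (cont_of_int b' hb'S.1.1 hb'S.1.2 hb'S.2)
      refine (hgc s ⟨hs.1, hsb'.le⟩).mono_of_mem_nhdsWithin ?_
      rw [mem_nhdsWithin]
      exact ⟨Iio b', isOpen_Iio, hsb', fun y hy => ⟨hy.2.1, hy.1.le⟩⟩
    have hm : AEStronglyMeasurable g (volume.restrict (Ico 0 a)) :=
      hgcIco.aestronglyMeasurable measurableSet_Ico
    have hint : IntegrableOn g (Ico 0 a) volume := by
      refine Integrable.mono' (integrable_const (ε0 + K * M)) hm ?_
      rw [ae_restrict_iff' measurableSet_Ico]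
      filter_upwards with s hs
      exact hgbd s (hIco hs)
    exact hint.congr_set_ae Ico_ae_eq_Ioc.symm
  have hta : a = t := by
    by_contra hne
    have hlt : a < t := lt_of_le_of_ne hat hne
    have hconst : ∀ s ∈ Ioc a t, x s = x 0 := by
      intro s hs
      have hs0 : 0 ≤ s := ha0.trans hs.1.le
      have hni : ¬ IntervalIntegrable g volume 0 s := by
        intro h
        exact absurd (le_csSup hSbdd (⟨⟨hs0, hs.2⟩, h⟩ : s ∈ S)) (not_le.2 hs.1)
      rw [hx s ⟨hs0, hs.2⟩, intervalIntegral.integral_undef hni, add_zero]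
    have htS : t ∈ S := by
      refine ⟨⟨ht, le_rfl⟩, ?_⟩
      rw [intervalIntegrable_iff_integrableOn_Ioc_of_le ht]
      have h1 : IntegrableOn g (Ioc 0 a) volume := by
        rw [← intervalIntegrable_iff_integrableOn_Ioc_of_le ha0]; exact haS.2
      have h2 : IntegrableOn g (Ioc a t) volume := by
        have hc : IntegrableOn (fun _ : ℝ => g 0) (Ioc a t) volume :=
          integrableOn_const measure_Ioc_lt_top.ne
        refine hc.congr_fun (fun s hs => ?_) measurableSet_Ioc
        show g 0 = F (x s)
        rw [hconst s hs]
      rw [← Ioc_union_Ioc_eq_Ioc ha0 hlt.le]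
      exact h1.union h2
    exact absurd (le_csSup hSbdd htS) (not_le.2 hlt)
  rw [hta] at haS
  exact ⟨cont_of_int t ht le_rfl haS.2, deriv_of_int t ht le_rfl haS.2⟩

lemma dist_sol {K t ε δ : ℝ} (hK : 0 ≤ K) (ht : 0 ≤ t)
    {F G : E → E} (hF : ∀ x y : E, ‖F x - F y‖ ≤ K * ‖x - y‖)
    (hG : ∀ x y : E, ‖G x - G y‖ ≤ K * ‖x - y‖)
    (hFG : ∀ y : E, ‖G y - F y‖ ≤ ε)
    {x₁ x₂ : ℝ → E}
    (h₁ : ∀ s ∈ Icc (0:ℝ) t, x₁ s = x₁ 0 + ∫ τ in (0:ℝ)..s, F (x₁ τ))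
    (h₂ : ∀ s ∈ Icc (0:ℝ) t, x₂ s = x₂ 0 + ∫ τ in (0:ℝ)..s, G (x₂ τ))
    (hδ : dist (x₁ 0) (x₂ 0) ≤ δ) :
    dist (x₁ t) (x₂ t) ≤ gronwallBound δ K ε t := by
  obtain ⟨hc₁, hd₁⟩ := sol_regular hK ht hF h₁
  obtain ⟨hc₂, hd₂⟩ := sol_regular hK ht hG h₂
  have hv : ∀ _ : ℝ, LipschitzWith K.toNNReal F := fun _ => lipschitz_of_bound' hK hF
  have h := dist_le_of_approx_trajectories_ODE (v := fun _ y => F y)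
      (f' := fun s => F (x₁ s)) (g' := fun s => G (x₂ s)) (εf := 0) (εg := ε)
      hv hc₁ hd₁
      (fun s _ => le_of_eq (dist_self _))
      hc₂ hd₂
      (fun s _ => by rw [dist_eq_norm]; exact hFG (x₂ s))
      hδ t ⟨ht, le_rfl⟩
  rwa [zero_add, sub_zero, Real.coe_toNNReal K hK] at h


end Stmt8Aux

theorem stmt_8 (n m : ℕ) (K T : ℝ) (hK : 0 ≤ K) (hT : 0 ≤ T) :
    ∃ L : ℝ, 0 ≤ L ∧
      ∀ (Θ : Type) (_ : Nonempty Θ)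
        (f : Θ → EuclideanSpace ℝ (Fin n) → EuclideanSpace ℝ (Fin m) → EuclideanSpace ℝ (Fin n)),
        (∀ (θ : Θ) (x y : EuclideanSpace ℝ (Fin n)) (u v : EuclideanSpace ℝ (Fin m)),
            ‖f θ x u - f θ y v‖ ≤ K * (‖x - y‖ + ‖u - v‖)) →
        (∀ (θ : Θ) (x₀ : EuclideanSpace ℝ (Fin n)) (u : EuclideanSpace ℝ (Fin m)),
            ∃ x : ℝ → EuclideanSpace ℝ (Fin n), x 0 = x₀ ∧
              ∀ s ∈ Icc (0 : ℝ) T, x s = x 0 + ∫ τ in (0 : ℝ)..s, f θ (x τ) u) →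
        ∀ (X01 X02 : Set (EuclideanSpace ℝ (Fin n))),
          X01.Nonempty → IsCompact X01 → X02.Nonempty → IsCompact X02 →
        ∀ (u₁ u₂ : EuclideanSpace ℝ (Fin m)) (t : ℝ), t ∈ Icc (0 : ℝ) T →
          Metric.hausdorffDist (reachSet f X01 u₁ t) (reachSet f X02 u₂ t) ≤
            L * (Metric.hausdorffDist X01 X02 + ‖u₁ - u₂‖) := by
  refine ⟨Real.exp (K * T) * (1 + K * T), by positivity, ?_⟩
  intro Θ hΘ f hf hexist X01 X02 hne1 hc1 hne2 hc2 u₁ u₂ t ht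
  set L := Real.exp (K * T) * (1 + K * T) with hL
  -- key one-sided estimate
  have key : ∀ (X Y : Set (EuclideanSpace ℝ (Fin n))), Y.Nonempty → IsCompact Y →
      EMetric.hausdorffEdist X Y ≠ ⊤ →
      ∀ (u v : EuclideanSpace ℝ (Fin m)), ∀ z ∈ reachSet f X u t,
        ∃ w ∈ reachSet f Y v t,
          dist z w ≤ L * (Metric.hausdorffDist X Y + ‖u - v‖) := by
    intro X Y hYne hYc hfin u v z hz
    obtain ⟨θ, x₁, hx₁0, hx₁eq, rfl⟩ := hz
    obtain ⟨y0, hy0Y, hy0d⟩ := hYc.exists_infDist_eq_dist hYne (x₁ 0)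
    have hdist0 : dist (x₁ 0) y0 ≤ Metric.hausdorffDist X Y := by
      rw [← hy0d]
      exact Metric.infDist_le_hausdorffDist_of_mem hx₁0 hfin
    obtain ⟨x₂, hx₂0, hx₂eq⟩ := hexist θ y0 v
    have hx₂eq' : ∀ s ∈ Icc (0:ℝ) t, x₂ s = x₂ 0 + ∫ τ in (0:ℝ)..s, f θ (x₂ τ) v :=
      fun s hs => hx₂eq s ⟨hs.1, hs.2.trans ht.2⟩
    refine ⟨x₂ t, ⟨θ, x₂, by rw [hx₂0]; exact hy0Y, hx₂eq', rfl⟩, ?_⟩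
    have hFlip : ∀ a b : EuclideanSpace ℝ (Fin n), ‖f θ a u - f θ b u‖ ≤ K * ‖a - b‖ := by
      intro a b
      have := hf θ a b u u
      simpa using this
    have hGlip : ∀ a b : EuclideanSpace ℝ (Fin n), ‖f θ a v - f θ b v‖ ≤ K * ‖a - b‖ := by
      intro a b
      have := hf θ a b v v
      simpa using this
    have hFG : ∀ y : EuclideanSpace ℝ (Fin n), ‖f θ y v - f θ y u‖ ≤ K * ‖u - v‖ := by
      intro y
      have := hf θ y y v u
      simpa [norm_sub_rev u v] using this
    have hδ : dist (x₁ 0) (x₂ 0) ≤ Metric.hausdorffDist X Y := by rw [hx₂0]; exact hdist0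
    have hds := dist_sol (ε := K * ‖u - v‖) hK ht.1 hFlip hGlip hFG hx₁eq hx₂eq' hδ
    refine hds.trans ?_
    exact gronwallBound_le_L hK Metric.hausdorffDist_nonneg (norm_nonneg _) ht.1 ht.2
  have hfin12 : EMetric.hausdorffEdist X01 X02 ≠ ⊤ :=
    Metric.hausdorffEdist_ne_top_of_nonempty_of_bounded hne1 hne2 hc1.isBounded hc2.isBounded
  have hfin21 : EMetric.hausdorffEdist X02 X01 ≠ ⊤ := by
    exact fun h => hfin12 (EMetric.hausdorffEdist_comm.trans h)
  have hr0 : 0 ≤ L * (Metric.hausdorffDist X01 X02 + ‖u₁ - u₂‖) := by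
    have : (0:ℝ) ≤ Metric.hausdorffDist X01 X02 := Metric.hausdorffDist_nonneg
    positivity
  refine Metric.hausdorffDist_le_of_mem_dist hr0 ?_ ?_
  · exact key X01 X02 hne2 hc2 hfin12 u₁ u₂
  · intro z hz
    obtain ⟨w, hw, hdzw⟩ := key X02 X01 hne1 hc1 hfin21 u₂ u₁ z hz
    refine ⟨w, hw, ?_⟩
    rwa [Metric.hausdorffDist_comm, norm_sub_rev] at hdzw
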